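/- Let X, Y be symmetric real n×n matrices and η > 0. Let u ∈ ℝ be such that u·I_n − η·X is positive definite and tr((u·I_n − η·X)^{-2}) = 1. Define Φ_η(Z) := sup over density matrices M' of [tr(Z·M') + (2/η)·tr(√M')]. If ‖(u·I_n − η·X)⁻¹ · η·Y‖ < 1 (spectral norm), then u·I_n − η·(X + Y) is positive definite and Φ_η(X + Y) − Φ_η(X) ≤ (1/η)·[tr((u·I_n − η·(X+Y))⁻¹) − tr((u·I_n − η·X)⁻¹)]. -/

import Mathlib

open Matrix
open scoped Matrix.Norms.L2Operator

open Classical in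
/-- The positive semidefinite square root of a matrix (zero if the matrix is not
positive semidefinite). -/
noncomputable def psdSqrt {n : ℕ} (M : Matrix (Fin n) (Fin n) ℝ) :
    Matrix (Fin n) (Fin n) ℝ :=
  if h : M.PosSemidef then
    h.1.eigenvectorUnitary.1 * diagonal (Real.sqrt ∘ h.1.eigenvalues) *
      (star h.1.eigenvectorUnitary : Matrix (Fin n) (Fin n) ℝ) else 0

/-- The `ℓ_{1/2}`-regularized maximum-eigenvalue potential
`Φ_η(X) = sup { tr(X M) + (2/η) tr(√M) : M a density matrix }`. -/
noncomputable def potential {n : ℕ} (η : ℝ) (X : Matrix (Fin n) (Fin n) ℝ) : ℝ :=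
  sSup {r : ℝ | ∃ M : Matrix (Fin n) (Fin n) ℝ, M.PosSemidef ∧ M.trace = 1 ∧
    r = (X * M).trace + (2 / η) * (psdSqrt M).trace}

/-!
For positive definite `A = u - ηZ` and a density matrix `M`, expanding
`(√M - A⁻¹) A (√M - A⁻¹) ≥ 0` gives `2 tr √M ≤ tr (A M) + tr A⁻¹`, that is
`Φ_η(Z) ≤ (u + tr A⁻¹) / η`, with equality at `M = A⁻²` when `tr A⁻² = 1`. The claim is this
bound for `X + Y` minus the equality for `X`. Positivity of `u - η(X + Y) = A - ηY` holds because
an eigenvalue `μ ≤ 0` with unit eigenvector `v` would give `A⁻¹ (ηY) v = v - μ A⁻¹ v`, whose norm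
is at least `1` since `⟪v, A⁻¹ v⟫ ≥ 0`.
-/

open scoped RealInnerProductSpace

theorem norm_le_norm_add_of_inner_nonneg {E : Type*} [NormedAddCommGroup E]
    [InnerProductSpace ℝ E] {v w : E} (h : 0 ≤ ⟪v, w⟫) : ‖v‖ ≤ ‖v + w‖ :=
  le_of_sq_le_sq (by rw [norm_add_sq_real]; nlinarith [sq_nonneg ‖w‖]) (norm_nonneg _)

section

variable {ι : Type*} [Fintype ι] [DecidableEq ι]

theorem Matrix.PosDef.sub_of_norm_inv_mul_lt_one {A C : Matrix ι ι ℝ} (hA : A.PosDef)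
    (hC : C.IsHermitian) (h : ‖A⁻¹ * C‖ < 1) : (A - C).PosDef := by
  have hB : (A - C).IsHermitian := hA.1.sub hC
  refine hB.posDef_iff_eigenvalues_pos.mpr fun i => ?_
  by_contra! hμ
  set μ := hB.eigenvalues i
  set v := hB.eigenvectorBasis i
  set w : EuclideanSpace ℝ ι := WithLp.toLp 2 (A⁻¹ *ᵥ ⇑v)
  have hv : ‖v‖ = 1 := hB.eigenvectorBasis.orthonormal.1 i
  have hCv : WithLp.toLp 2 ((A⁻¹ * C) *ᵥ ⇑v) = v + (-μ) • w := by
    have hC_eq : C = A - (A - C) := by abel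
    ext j
    rw [← mulVec_mulVec, hC_eq, sub_mulVec, hB.mulVec_eigenvectorBasis i, mulVec_sub,
      mulVec_mulVec, nonsing_inv_mul _ hA.det_pos.ne'.isUnit, one_mulVec, mulVec_smul]
    simp [w, sub_eq_add_neg, μ, v]
  have hinner : 0 ≤ ⟪v, (-μ) • w⟫ := by
    rw [real_inner_smul_right]
    refine mul_nonneg (neg_nonneg.mpr hμ) ?_
    simpa [w, EuclideanSpace.inner_eq_star_dotProduct, dotProduct_comm] using
      hA.inv.posSemidef.dotProduct_mulVec_nonneg ⇑v
  have hle := l2_opNorm_mulVec (A⁻¹ * C) v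
  change ‖WithLp.toLp 2 _‖ ≤ _ at hle
  rw [hCv, hv, mul_one] at hle
  linarith [norm_le_norm_add_of_inner_nonneg hinner]

theorem Matrix.PosDef.two_mul_trace_le {A S : Matrix ι ι ℝ} (hA : A.PosDef)
    (hS : S.IsHermitian) : 2 * S.trace ≤ (S * A * S).trace + A⁻¹.trace := by
  have hAinv : A * A⁻¹ = 1 := mul_nonsing_inv _ hA.det_pos.ne'.isUnit
  have hinvA : A⁻¹ * A = 1 := nonsing_inv_mul _ hA.det_pos.ne'.isUnit
  have hpsd := hA.posSemidef.conjTranspose_mul_mul_same (S - A⁻¹)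
  have hexp : (S - A⁻¹)ᴴ * A * (S - A⁻¹) = S * A * S - S - S + A⁻¹ := by
    rw [conjTranspose_sub, hS.eq, hA.1.inv.eq, Matrix.sub_mul, Matrix.sub_mul, hinvA,
      Matrix.mul_sub, Matrix.mul_sub, Matrix.mul_assoc S A A⁻¹, hAinv, Matrix.mul_one,
      Matrix.one_mul, Matrix.one_mul]
    abel
  have := hpsd.trace_nonneg
  rw [hexp, trace_add, trace_sub, trace_sub] at this
  linarith

theorem trace_smul_one_sub_smul_mul (u η : ℝ) (Z M : Matrix ι ι ℝ) :
    ((u • (1 : Matrix ι ι ℝ) - η • Z) * M).trace = u * M.trace - η * (Z * M).trace := by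
  simp [Matrix.sub_mul, trace_sub, trace_smul]

end

open scoped MatrixOrder in
theorem psdSqrt_eq_cfcSqrt {n : ℕ} {M : Matrix (Fin n) (Fin n) ℝ} (hM : M.PosSemidef) :
    psdSqrt M = CFC.sqrt M := by
  rw [CFC.sqrt_eq_real_sqrt M hM.nonneg, cfcₙ_eq_cfc, hM.1.cfc_eq, IsHermitian.cfc,
    Unitary.conjStarAlgAut_apply, psdSqrt, dif_pos hM, RCLike.ofReal_real_eq_id]
  rfl

open scoped MatrixOrder in
theorem two_mul_trace_psdSqrt_le {n : ℕ} {A M : Matrix (Fin n) (Fin n) ℝ} (hA : A.PosDef)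
    (hM : M.PosSemidef) : 2 * (psdSqrt M).trace ≤ (A * M).trace + A⁻¹.trace := by
  have hsq : psdSqrt M * psdSqrt M = M := by
    rw [psdSqrt_eq_cfcSqrt hM]; exact CFC.sqrt_mul_sqrt_self M hM.nonneg
  have hS : (psdSqrt M).IsHermitian := by
    rw [psdSqrt_eq_cfcSqrt hM]; exact (CFC.sqrt_nonneg M).posSemidef.1
  have := hA.two_mul_trace_le hS
  rwa [trace_mul_cycle, hsq, trace_mul_comm] at this

open scoped MatrixOrder in
theorem psdSqrt_sq {n : ℕ} {P : Matrix (Fin n) (Fin n) ℝ} (hP : P.PosSemidef) :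
    psdSqrt (P ^ 2) = P := by
  rw [psdSqrt_eq_cfcSqrt (hP.pow 2)]
  exact CFC.sqrt_sq P hP.nonneg

section Potential

variable {n : ℕ} {η u : ℝ} {Z : Matrix (Fin n) (Fin n) ℝ}

theorem potential_objective_le (hη : 0 < η)
    (hA : (u • (1 : Matrix (Fin n) (Fin n) ℝ) - η • Z).PosDef)
    {M : Matrix (Fin n) (Fin n) ℝ} (hM : M.PosSemidef) (hMtr : M.trace = 1) :
    (Z * M).trace + (2 / η) * (psdSqrt M).trace ≤
      (u + ((u • (1 : Matrix (Fin n) (Fin n) ℝ) - η • Z)⁻¹).trace) / η := by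
  have h := two_mul_trace_psdSqrt_le hA hM
  rw [trace_smul_one_sub_smul_mul, hMtr] at h
  have hη2 : (2 / η) * (psdSqrt M).trace * η = 2 * (psdSqrt M).trace := by field_simp
  rw [le_div_iff₀ hη, add_mul, hη2]
  linarith

theorem potential_le_of_posDef (hn : n ≠ 0) (hη : 0 < η)
    (hA : (u • (1 : Matrix (Fin n) (Fin n) ℝ) - η • Z).PosDef) :
    potential η Z ≤ (u + ((u • (1 : Matrix (Fin n) (Fin n) ℝ) - η • Z)⁻¹).trace) / η := by
  have hunif : ((n : ℝ)⁻¹ • (1 : Matrix (Fin n) (Fin n) ℝ)).PosSemidef :=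
    PosSemidef.one.smul (by positivity)
  have hunif_tr : ((n : ℝ)⁻¹ • (1 : Matrix (Fin n) (Fin n) ℝ)).trace = 1 := by
    simp [hn]
  refine csSup_le ⟨_, _, hunif, hunif_tr, rfl⟩ ?_
  rintro r ⟨M, hM, hMtr, rfl⟩
  exact potential_objective_le hη hA hM hMtr

theorem potential_eq_of_trace_inv_sq_eq_one (hη : 0 < η)
    (hA : (u • (1 : Matrix (Fin n) (Fin n) ℝ) - η • Z).PosDef)
    (htr : ((u • (1 : Matrix (Fin n) (Fin n) ℝ) - η • Z)⁻¹ ^ 2).trace = 1) :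
    potential η Z = (u + ((u • (1 : Matrix (Fin n) (Fin n) ℝ) - η • Z)⁻¹).trace) / η := by
  set A := u • (1 : Matrix (Fin n) (Fin n) ℝ) - η • Z
  have hn : n ≠ 0 := by rintro rfl; simp at htr
  refine (potential_le_of_posDef hn hη hA).antisymm ?_
  have hbdd : BddAbove {r : ℝ | ∃ M : Matrix (Fin n) (Fin n) ℝ, M.PosSemidef ∧ M.trace = 1 ∧
      r = (Z * M).trace + (2 / η) * (psdSqrt M).trace} := by
    refine ⟨(u + A⁻¹.trace) / η, ?_⟩
    rintro r ⟨M, hM, hMtr, rfl⟩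
    exact potential_objective_le hη hA hM hMtr
  have hAM : (A * A⁻¹ ^ 2).trace = A⁻¹.trace := by
    rw [sq, ← Matrix.mul_assoc, mul_nonsing_inv _ hA.det_pos.ne'.isUnit, Matrix.one_mul]
  rw [trace_smul_one_sub_smul_mul, htr] at hAM
  refine le_csSup_of_le hbdd ⟨A⁻¹ ^ 2, hA.inv.posSemidef.pow 2, htr, rfl⟩ (le_of_eq ?_)
  rw [psdSqrt_sq hA.inv.posSemidef]
  field_simp
  linarith

end Potential

theorem potential_increase_barrier_general (n : ℕ) (X Y : Matrix (Fin n) (Fin n) ℝ)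
    (hY : Y.IsSymm) (η : ℝ) (hη : 0 < η) (u : ℝ)
    (hu : (u • (1 : Matrix (Fin n) (Fin n) ℝ) - η • X).PosDef)
    (htr : ((u • (1 : Matrix (Fin n) (Fin n) ℝ) - η • X)⁻¹ ^ 2).trace = 1)
    (hnorm : ‖(u • (1 : Matrix (Fin n) (Fin n) ℝ) - η • X)⁻¹ * (η • Y)‖ < 1) :
    (u • (1 : Matrix (Fin n) (Fin n) ℝ) - η • (X + Y)).PosDef ∧
    potential η (X + Y) - potential η X ≤
      (1 / η) *
        (((u • (1 : Matrix (Fin n) (Fin n) ℝ) - η • (X + Y))⁻¹).trace -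
          ((u • (1 : Matrix (Fin n) (Fin n) ℝ) - η • X)⁻¹).trace) := by
  have hn : n ≠ 0 := by rintro rfl; simp at htr
  have hB : (u • (1 : Matrix (Fin n) (Fin n) ℝ) - η • (X + Y)).PosDef := by
    rw [smul_add, ← sub_sub]
    exact hu.sub_of_norm_inv_mul_lt_one ((isHermitian_iff_isSymm.mpr hY).smul (.all η)) hnorm
  refine ⟨hB, ?_⟩
  have hle := potential_le_of_posDef hn hη hB
  rw [le_div_iff₀ hη] at hle
  rw [potential_eq_of_trace_inv_sq_eq_one hη hu htr]
  field_simp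
  linarith

/-- Claim A.1: the potential increase is bounded by the change of the
trace-inverse barrier evaluated at the old shift `u`. -/
theorem potential_increase_barrier (n : ℕ) (X Y : Matrix (Fin n) (Fin n) ℝ)
    (hX : X.IsSymm) (hY : Y.IsSymm) (η : ℝ) (hη : 0 < η) (u : ℝ)
    (hu : (u • (1 : Matrix (Fin n) (Fin n) ℝ) - η • X).PosDef)
    (htr : ((u • (1 : Matrix (Fin n) (Fin n) ℝ) - η • X)⁻¹ ^ 2).trace = 1)
    (hnorm : ‖(u • (1 : Matrix (Fin n) (Fin n) ℝ) - η • X)⁻¹ * (η • Y)‖ < 1) :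
    (u • (1 : Matrix (Fin n) (Fin n) ℝ) - η • (X + Y)).PosDef ∧
    potential η (X + Y) - potential η X ≤
      (1 / η) *
        (((u • (1 : Matrix (Fin n) (Fin n) ℝ) - η • (X + Y))⁻¹).trace -
          ((u • (1 : Matrix (Fin n) (Fin n) ℝ) - η • X)⁻¹).trace) :=
  potential_increase_barrier_general n X Y hY η hη u hu htr hnorm
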